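/- arXiv:1208.2783 — 4 statements merged into one kernel-verified Lean document; each statement's English description precedes it below -/
import Mathlib

section
/- Let Σ be a finite alphabet with |Σ| ≥ 2. For cellular automata c, d on Σ^ℤ with common radius r, define the difference set D(c,d) = {w ∈ Σ^{2r+1} | the central cells of c(w) and d(w) differ} and δ(c,d) = |D(c,d)| / |Σ|^{2r+1}. Then δ is a metric on the set of cellular automata (in particular, its value does not depend on the choice of common radius r, δ(c,d) = 0 iff c = d, and the triangle inequality holds). -/
open MeasureTheory Filter Function

section BasicDefs

variable {A : Type}

/-- `f` admits a local rule of radius `r`: there is `F` depending only on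
coordinates in `[-r, r]` such that `f x i = F (σ^i x)`. -/
def HasRadius (r : ℕ) (f : (ℤ → A) → (ℤ → A)) : Prop :=
  ∃ F : (ℤ → A) → A,
    (∀ x y : ℤ → A, (∀ j : ℤ, |j| ≤ (r : ℤ) → x j = y j) → F x = F y) ∧
    ∀ (x : ℤ → A) (i : ℤ), f x i = F fun j => x (i + j)

/-- A cellular automaton is a map admitting a local rule of some radius. -/
def IsCA (f : (ℤ → A) → (ℤ → A)) : Prop := ∃ r, HasRadius r f

/-- The minimal radius of a cellular automaton. -/
noncomputable def rad (f : (ℤ → A) → (ℤ → A)) : ℕ := sInf {r : ℕ | HasRadius r f}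

/-- Centered words of radius `r`. -/
def Word (A : Type) (r : ℕ) := (Finset.Icc (-(r : ℤ)) (r : ℤ) : Finset ℤ) → A

/-- The difference set of `c` and `d` for radius `r`: centered words of radius `r`
on which the images of `c` and `d` differ at the central cell. -/
def diffSet (r : ℕ) (c d : (ℤ → A) → (ℤ → A)) : Set (Word A r) :=
  {w | ∃ x : ℤ → A, (∀ j : (Finset.Icc (-(r : ℤ)) (r : ℤ) : Finset ℤ), x j.1 = w j) ∧
        c x 0 ≠ d x 0}

/-- The shift map. -/
def shift (x : ℤ → A) : ℤ → A := fun i => x (i + 1)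

/-- Preimages of the centered word `v` of radius `n` under the word function of `c`
used with radius `r`: centered words `u` of radius `n + r` such that some (equivalently,
by the radius assumption, every) configuration extending `u` maps under `c` to a
configuration extending `v` in its central part. -/
def wordPreimages (c : (ℤ → A) → (ℤ → A)) (n r : ℕ) (v : Word A n) :
    Set (Word A (n + r)) :=
  {u | ∃ x : ℤ → A,
        (∀ j : (Finset.Icc (-((n + r : ℕ) : ℤ)) ((n + r : ℕ) : ℤ) : Finset ℤ), x j.1 = u j) ∧
        ∀ j : (Finset.Icc (-(n : ℤ)) (n : ℤ) : Finset ℤ), c x j.1 = v j}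

-- The Cantor metric on configurations.
open Classical in
noncomputable def dC (x y : ℤ → A) : ℝ :=
  ∑' i : ℤ, if x i ≠ y i then (2 : ℝ) ^ (-|i|) else 0

/-- The Besicovitch pseudodistance on configurations. -/
noncomputable def dB (x y : ℤ → A) : ℝ :=
  limsup (fun n : ℕ =>
    (({i : ℤ | |i| ≤ (n : ℤ) ∧ x i ≠ y i}.ncard : ℝ)) / (2 * (n : ℝ) + 1)) atTop

end BasicDefs

section FintypeDefs

variable {A : Type} [Fintype A]

/-- The normalized size of the difference set for radius `r`. -/
noncomputable def deltaR (r : ℕ) (c d : (ℤ → A) → (ℤ → A)) : ℝ :=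
  (diffSet r c d).ncard / (Fintype.card A : ℝ) ^ (2 * r + 1)

/-- The uniform Bernoulli distance between two cellular automata (computed with the
common radius `max (rad c) (rad d)`; by radius-independence this is the canonical value). -/
noncomputable def delta (c d : (ℤ → A) → (ℤ → A)) : ℝ :=
  deltaR (max (rad c) (rad d)) c d

end FintypeDefs

section MeasureDefs

variable {A : Type} [MeasurableSpace A]

/-- The pseudometric on cellular automata induced by the measure `μ`:
the measure of the cylinder of the difference set, i.e. of the set of
configurations on which `c` and `d` differ at coordinate `0`. -/
noncomputable def deltaMu (μ : Measure (ℤ → A)) (c d : (ℤ → A) → (ℤ → A)) : ℝ :=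
  (μ {x | c x 0 ≠ d x 0}).toReal

/-- `c` preserves the measure `μ`. -/
def Preserves (μ : Measure (ℤ → A)) (c : (ℤ → A) → (ℤ → A)) : Prop :=
  ∀ B : Set (ℤ → A), MeasurableSet B → μ (c ⁻¹' B) = μ B

/-- `μ` is shift-invariant. -/
def ShiftInvariant (μ : Measure (ℤ → A)) : Prop :=
  ∀ B : Set (ℤ → A), MeasurableSet B → μ (shift ⁻¹' B) = μ B

end MeasureDefs


/-! If `c` and `d` have common radius `r`, whether they differ at cell `0` of a configuration
depends only on its window `[-r, r]`. Enlarging the window to radius `r' ≥ r` therefore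
multiplies both the number of difference words and the number of all words by the number of
fillings of the new cells, so the ratio `deltaR` does not change. Symmetry and the triangle
inequality hold word by word, and since cellular automata commute with the shift, `c = d` as
soon as they agree at cell `0` of every configuration, i.e. as soon as the difference set is
empty. -/

section Radius

variable {A : Type} {r s : ℕ} {c d : (ℤ → A) → (ℤ → A)}

theorem HasRadius.apply_eq_apply_zero (hc : HasRadius r c) (x : ℤ → A) (i : ℤ) :
    c x i = c (fun j => x (i + j)) 0 := by
  obtain ⟨F, -, hF⟩ := hc
  simp only [hF, zero_add]

theorem HasRadius.apply_zero_eq_of_eqOn (hc : HasRadius r c) {x y : ℤ → A}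
    (h : ∀ j : ℤ, |j| ≤ (r : ℤ) → x j = y j) : c x 0 = c y 0 := by
  obtain ⟨F, hloc, hF⟩ := hc
  rw [hF, hF]
  exact hloc _ _ fun j hj => by simpa using h j hj

theorem HasRadius.eq_iff_forall_apply_zero_eq (hc : HasRadius r c) (hd : HasRadius s d) :
    c = d ↔ ∀ x, c x 0 = d x 0 := by
  refine ⟨fun h x => h ▸ rfl, fun h => ?_⟩
  funext x i
  rw [hc.apply_eq_apply_zero, hd.apply_eq_apply_zero, h]

end Radius

namespace Word

variable {A : Type} {r r' : ℕ}

instance [Finite A] (r : ℕ) : Finite (Word A r) :=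
  inferInstanceAs (Finite ((Finset.Icc (-(r : ℤ)) (r : ℤ) : Finset ℤ) → A))

theorem card [Finite A] (r : ℕ) : Nat.card (Word A r) = Nat.card A ^ (2 * r + 1) := by
  rw [Word, Nat.card_fun,
    Nat.card_eq_fintype_card (α := (Finset.Icc (-(r : ℤ)) (r : ℤ) : Finset ℤ)),
    Fintype.card_coe, Int.card_Icc]
  congr 1
  omega

theorem Icc_subset_Icc (h : r ≤ r') :
    Finset.Icc (-(r : ℤ)) (r : ℤ) ⊆ Finset.Icc (-(r' : ℤ)) (r' : ℤ) :=
  Finset.Icc_subset_Icc (by omega) (by omega)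

noncomputable def restrict (h : r ≤ r') (u : Word A r') : Word A r :=
  fun j => u ⟨j.1, Icc_subset_Icc h j.2⟩

noncomputable def outerCells (r r' : ℕ) : Finset ℤ :=
  Finset.Icc (-(r' : ℤ)) (r' : ℤ) \ Finset.Icc (-(r : ℤ)) (r : ℤ)

noncomputable def restrictEquiv (h : r ≤ r') : Word A r' ≃ Word A r × (outerCells r r' → A) where
  toFun u := (restrict h u, fun k => u ⟨k.1, (Finset.mem_sdiff.mp k.2).1⟩)
  invFun p j :=
    if hj : j.1 ∈ Finset.Icc (-(r : ℤ)) (r : ℤ) then p.1 ⟨j.1, hj⟩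
    else p.2 ⟨j.1, Finset.mem_sdiff.mpr ⟨j.2, hj⟩⟩
  left_inv u := by
    funext j
    by_cases hj : j.1 ∈ Finset.Icc (-(r : ℤ)) (r : ℤ)
    exacts [dif_pos hj, dif_neg hj]
  right_inv := fun ⟨w, g⟩ => by
    refine Prod.ext (funext fun j => dif_pos j.2) (funext fun k => ?_)
    exact dif_neg (Finset.mem_sdiff.mp k.2).2

noncomputable def extend (u : Word A r') (x : ℤ → A) : ℤ → A := fun i =>
  if hi : i ∈ Finset.Icc (-(r' : ℤ)) (r' : ℤ) then u ⟨i, hi⟩ else x i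

theorem card_eq_card_mul (h : r ≤ r') [Finite A] :
    Nat.card (Word A r') = Nat.card (Word A r) * Nat.card (outerCells r r' → A) := by
  rw [Nat.card_congr (restrictEquiv h), Nat.card_prod]

theorem ncard_preimage_restrict [Finite A] (h : r ≤ r') (S : Set (Word A r)) :
    (restrict h ⁻¹' S).ncard = S.ncard * Nat.card (outerCells r r' → A) := by
  have hpre : restrict h ⁻¹' S = restrictEquiv h ⁻¹' (S ×ˢ Set.univ) := by
    ext u
    simp only [Set.mem_preimage, Set.mem_prod, Set.mem_univ, and_true]
    rfl
  rw [hpre, ← Set.ncard_univ, ← Set.ncard_prod]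
  exact Set.ncard_preimage_of_injective_subset_range (restrictEquiv h).injective
    (by simp)

end Word

section DiffSet

variable {A : Type} {r r' : ℕ} {c d : (ℤ → A) → (ℤ → A)}

theorem diffSet_comm (r : ℕ) (c d : (ℤ → A) → (ℤ → A)) : diffSet r c d = diffSet r d c := by
  ext w
  constructor <;> exact fun ⟨x, hx, hne⟩ => ⟨x, hx, hne.symm⟩

theorem diffSet_subset_union (r : ℕ) (c d e : (ℤ → A) → (ℤ → A)) :
    diffSet r c e ⊆ diffSet r c d ∪ diffSet r d e := by
  rintro w ⟨x, hx, hne⟩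
  by_cases hcd : c x 0 = d x 0
  · exact Or.inr ⟨x, hx, fun hde => hne (hcd.trans hde)⟩
  · exact Or.inl ⟨x, hx, hcd⟩

theorem diffSet_eq_empty_iff : diffSet r c d = ∅ ↔ ∀ x, c x 0 = d x 0 := by
  refine ⟨fun h x => by_contra fun hne => ?_, fun h => ?_⟩
  · have hmem : (fun j => x j.1 : Word A r) ∈ diffSet r c d := ⟨x, fun _ => rfl, hne⟩
    rw [h] at hmem
    exact hmem
  · exact Set.eq_empty_of_forall_notMem fun w ⟨x, _, hne⟩ => hne (h x)

theorem diffSet_eq_preimage_restrict (h : r ≤ r') (hc : HasRadius r c) (hd : HasRadius r d) :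
    diffSet r' c d = Word.restrict h ⁻¹' diffSet r c d := by
  ext u
  constructor
  · rintro ⟨x, hx, hne⟩
    exact ⟨x, fun j => hx ⟨j.1, _⟩, hne⟩
  · rintro ⟨x, hx, hne⟩
    have hagree : ∀ j : ℤ, |j| ≤ (r : ℤ) → u.extend x j = x j := by
      intro j hj
      have hjr : j ∈ Finset.Icc (-(r : ℤ)) (r : ℤ) := Finset.mem_Icc.mpr (abs_le.mp hj)
      rw [Word.extend, dif_pos (Word.Icc_subset_Icc h hjr)]
      exact (hx ⟨j, hjr⟩).symm
    refine ⟨u.extend x, fun j => dif_pos j.2, ?_⟩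
    rwa [hc.apply_zero_eq_of_eqOn hagree, hd.apply_zero_eq_of_eqOn hagree]

end DiffSet

section DeltaR

variable {A : Type} [Fintype A] {r r' : ℕ} {c d : (ℤ → A) → (ℤ → A)}

theorem deltaR_eq_ncard_div_card (r : ℕ) (c d : (ℤ → A) → (ℤ → A)) :
    deltaR r c d = (diffSet r c d).ncard / Nat.card (Word A r) := by
  rw [deltaR, Word.card, Nat.card_eq_fintype_card]
  push_cast
  rfl

theorem deltaR_nonneg (r : ℕ) (c d : (ℤ → A) → (ℤ → A)) : 0 ≤ deltaR r c d := by
  unfold deltaR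
  positivity

theorem deltaR_comm (r : ℕ) (c d : (ℤ → A) → (ℤ → A)) : deltaR r c d = deltaR r d c := by
  rw [deltaR, diffSet_comm, deltaR]

theorem deltaR_triangle (r : ℕ) (c d e : (ℤ → A) → (ℤ → A)) :
    deltaR r c e ≤ deltaR r c d + deltaR r d e := by
  unfold deltaR
  rw [← add_div]
  gcongr
  exact_mod_cast (Set.ncard_le_ncard (diffSet_subset_union r c d e)).trans
    (Set.ncard_union_le _ _)

theorem deltaR_eq_zero_iff : deltaR r c d = 0 ↔ ∀ x, c x 0 = d x 0 := by
  rcases isEmpty_or_nonempty A with hA | hA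
  · simp [deltaR, Fintype.card_eq_zero]
  · rw [deltaR, div_eq_zero_iff, ← diffSet_eq_empty_iff (r := r), ← Set.ncard_eq_zero]
    simp

theorem deltaR_eq_of_le (h : r ≤ r') (hc : HasRadius r c) (hd : HasRadius r d) :
    deltaR r' c d = deltaR r c d := by
  rcases isEmpty_or_nonempty A with hA | hA
  · -- both sides are divisions by `0 ^ _ = 0`
    simp [deltaR, Fintype.card_eq_zero]
  · have hm : (Nat.card (Word.outerCells r r' → A) : ℝ) ≠ 0 := by
      exact_mod_cast Nat.card_pos.ne'
    rw [deltaR_eq_ncard_div_card, deltaR_eq_ncard_div_card, diffSet_eq_preimage_restrict h hc hd,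
      Word.ncard_preimage_restrict, Word.card_eq_card_mul h]
    push_cast
    exact mul_div_mul_right _ _ hm

end DeltaR

theorem stmt0_general {A : Type} [Fintype A] :
    (∀ (c d : (ℤ → A) → (ℤ → A)) (r r' : ℕ), HasRadius r c → HasRadius r d →
      HasRadius r' c → HasRadius r' d → deltaR r c d = deltaR r' c d) ∧
    (∀ (c d : (ℤ → A) → (ℤ → A)) (r : ℕ), HasRadius r c → HasRadius r d →
      (deltaR r c d = 0 ↔ c = d)) ∧
    (∀ (c d : (ℤ → A) → (ℤ → A)) (r : ℕ), 0 ≤ deltaR r c d) ∧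
    (∀ (c d : (ℤ → A) → (ℤ → A)) (r : ℕ), deltaR r c d = deltaR r d c) ∧
    (∀ (c d e : (ℤ → A) → (ℤ → A)) (r : ℕ), HasRadius r c → HasRadius r d →
      HasRadius r e → deltaR r c e ≤ deltaR r c d + deltaR r d e) := by
  refine ⟨fun c d r r' hc hd hc' hd' => ?_, fun c d r hc hd => ?_,
    fun c d r => deltaR_nonneg r c d, fun c d r => deltaR_comm r c d,
    fun c d e r _ _ _ => deltaR_triangle r c d e⟩
  · rw [← deltaR_eq_of_le (le_max_left r r') hc hd, ← deltaR_eq_of_le (le_max_right r r') hc' hd']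
  · rw [deltaR_eq_zero_iff, hc.eq_iff_forall_apply_zero_eq hd]

/-- `δ` is a metric on the set of cellular automata: its value does not
depend on the choice of common radius, it vanishes exactly on the diagonal, is
nonnegative, symmetric, and satisfies the triangle inequality. -/
theorem stmt0 {A : Type} [Fintype A] (hA : 2 ≤ Fintype.card A) :
    (∀ (c d : (ℤ → A) → (ℤ → A)) (r r' : ℕ), HasRadius r c → HasRadius r d →
      HasRadius r' c → HasRadius r' d → deltaR r c d = deltaR r' c d) ∧
    (∀ (c d : (ℤ → A) → (ℤ → A)) (r : ℕ), HasRadius r c → HasRadius r d →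
      (deltaR r c d = 0 ↔ c = d)) ∧
    (∀ (c d : (ℤ → A) → (ℤ → A)) (r : ℕ), 0 ≤ deltaR r c d) ∧
    (∀ (c d : (ℤ → A) → (ℤ → A)) (r : ℕ), deltaR r c d = deltaR r d c) ∧
    (∀ (c d e : (ℤ → A) → (ℤ → A)) (r : ℕ), HasRadius r c → HasRadius r d →
      HasRadius r e → deltaR r c e ≤ deltaR r c d + deltaR r d e) :=
  stmt0_general
end

section
/- Let Σ be a finite alphabet with |Σ| ≥ 2 and let r ∈ ℕ. For any cellular automaton c of radius at most r on Σ^ℤ, the distance δ(σ^{r+1}, c) = 1 - 1/|Σ|, where σ is the shift map. Consequently, the metric space (CA, δ) is not totally bounded. -/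
/-!
A word `w` of radius `k > r` lies in the difference set of `σ^k` and `c` exactly when its
rightmost letter `w k` differs from the letter `c` writes at `0`, and the latter depends only on
`w` restricted to `[-r, r]`. So, whatever the other `2k` letters are, exactly `|Σ| - 1` of the
`|Σ|` choices of `w k` give a difference: the density is `1 - 1/|Σ|`. As `rad σ^k = k`, this is
`δ(σ^k, c)`. Given finitely many CAs, all of radius at most `R`, the automaton `σ^(R+1)` is thus at
distance `1 - 1/|Σ| ≥ 1/2` from each of them.
-/

open MeasureTheory Filter Function

section Counting

variable {A : Type*} [Fintype A]

lemma card_subtype_fst_ne {B : Type*} [Fintype B] (h : B → A) :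
    Nat.card {p : A × B // p.1 ≠ h p.2} = (Fintype.card A - 1) * Fintype.card B := by
  classical
  rw [Nat.card_congr (((Equiv.prodComm A B).subtypeEquiv (p := fun p => p.1 ≠ h p.2)
    fun _ => Iff.rfl).trans (Equiv.subtypeProdEquivSigmaSubtype fun b a => a ≠ h b)),
    Nat.card_sigma]
  simp [Fintype.card_subtype_compl, mul_comm]

lemma card_apply_ne_of_update_invariant {I : Type*} [Fintype I] [DecidableEq I] [Nonempty A]
    (i₀ : I) (g : (I → A) → A) (hg : ∀ w a, g (update w i₀ a) = g w) :
    Nat.card {w : I → A // w i₀ ≠ g w} =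
      (Fintype.card A - 1) * Fintype.card A ^ (Fintype.card I - 1) := by
  classical
  let e := Equiv.piSplitAt i₀ fun _ => A
  have he : ∀ w a, e.symm (a, (e w).2) = update w i₀ a := by
    intro w a
    ext j
    by_cases hj : j = i₀
    · subst hj
      simp [e, Equiv.piSplitAt]
    · simp [e, Equiv.piSplitAt, hj]
  let a₀ := Classical.arbitrary A
  rw [Nat.card_congr (e.subtypeEquiv (q := fun p => p.1 ≠ g (e.symm (a₀, p.2))) fun w => by
      rw [he, hg]; rfl), card_subtype_fst_ne fun v => g (e.symm (a₀, v))]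
  simp [Fintype.card_subtype_compl]

end Counting

section CellularAutomata

variable {A : Type}

def shiftPow (k : ℕ) (x : ℤ → A) : ℤ → A := fun i => x (i + k)

lemma shiftPow_succ (r : ℕ) :
    (shiftPow (r + 1) : (ℤ → A) → (ℤ → A)) = fun x i => x (i + r + 1) := by
  funext x i
  simp only [shiftPow, Nat.cast_succ, add_assoc]

lemma HasRadius.mono {r s : ℕ} {f : (ℤ → A) → (ℤ → A)} (hf : HasRadius r f) (h : r ≤ s) :
    HasRadius s f := by
  obtain ⟨F, hF, hloc⟩ := hf
  exact ⟨F, fun x y hxy => hF x y fun j hj => hxy j (hj.trans (by exact_mod_cast h)), hloc⟩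

lemma HasRadius.apply_zero_eq {r : ℕ} {f : (ℤ → A) → (ℤ → A)} (hf : HasRadius r f)
    {x y : ℤ → A} (h : ∀ j : ℤ, |j| ≤ r → x j = y j) : f x 0 = f y 0 := by
  obtain ⟨F, hF, hloc⟩ := hf
  simpa [hloc] using hF _ _ fun j hj => by simpa using h j hj

lemma rad_le_of_hasRadius {r : ℕ} {f : (ℤ → A) → (ℤ → A)} (h : HasRadius r f) : rad f ≤ r :=
  Nat.sInf_le h

lemma IsCA.hasRadius_rad {f : (ℤ → A) → (ℤ → A)} (h : IsCA f) : HasRadius (rad f) f :=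
  Nat.sInf_mem h

lemma hasRadius_shiftPow (k : ℕ) : HasRadius k (shiftPow k : (ℤ → A) → (ℤ → A)) :=
  ⟨fun x => x k, fun x y h => h k (by simp), fun x i => rfl⟩

lemma rad_shiftPow [Nontrivial A] (k : ℕ) : rad (shiftPow k : (ℤ → A) → (ℤ → A)) = k := by
  refine le_antisymm (rad_le_of_hasRadius (hasRadius_shiftPow k))
    (le_csInf ⟨k, hasRadius_shiftPow k⟩ ?_)
  intro s hs
  by_contra! hsk
  obtain ⟨a, b, hab⟩ := exists_pair_ne A
  classical
  -- the two configurations differ only at `k`, which a rule of radius `s < k` cannot see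
  have := hs.apply_zero_eq (x := fun _ => a) (y := update (fun _ => a) (k : ℤ) b) fun j hj => by
    rw [abs_le] at hj
    rw [update_of_ne]
    omega
  simp [shiftPow] at this
  exact hab this

end CellularAutomata

section Words

variable {A : Type} [Nonempty A] {n : ℕ}

noncomputable def Word.toConfig (w : Word A n) : ℤ → A := fun j =>
  if h : j ∈ Finset.Icc (-(n : ℤ)) n then w ⟨j, h⟩ else Classical.arbitrary A

lemma Word.toConfig_apply (w : Word A n) (j : Finset.Icc (-(n : ℤ)) n) :
    w.toConfig j = w j :=
  dif_pos j.2

lemma mem_diffSet_iff {c d : (ℤ → A) → (ℤ → A)} (hc : HasRadius n c) (hd : HasRadius n d)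
    (w : Word A n) : w ∈ diffSet n c d ↔ c w.toConfig 0 ≠ d w.toConfig 0 := by
  refine ⟨fun ⟨x, hx, hne⟩ => ?_, fun h => ⟨w.toConfig, w.toConfig_apply, h⟩⟩
  have hagree : ∀ j : ℤ, |j| ≤ n → x j = w.toConfig j := fun j hj => by
    have hmem : j ∈ Finset.Icc (-(n : ℤ)) n := Finset.mem_Icc.2 (abs_le.1 hj)
    rw [hx ⟨j, hmem⟩, w.toConfig_apply ⟨j, hmem⟩]
  rwa [hc.apply_zero_eq hagree, hd.apply_zero_eq hagree] at hne

end Words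

lemma deltaR_shiftPow {A : Type} [Fintype A] [Nonempty A] {r k : ℕ} {c : (ℤ → A) → (ℤ → A)}
    (hc : HasRadius r c) (hrk : r < k) :
    deltaR k (shiftPow k) c = 1 - 1 / (Fintype.card A : ℝ) := by
  classical
  let i₀ : Finset.Icc (-(k : ℤ)) k := ⟨k, by simp⟩
  let g : Word A k → A := fun w => c w.toConfig 0
  have hdiff : diffSet k (shiftPow k) c = {w | w i₀ ≠ g w} := by
    ext w
    rw [mem_diffSet_iff (hasRadius_shiftPow k) (hc.mono hrk.le)]
    simp only [shiftPow, zero_add]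
    rw [show w.toConfig k = w i₀ from w.toConfig_apply i₀]
    rfl
  have hg : ∀ (w : Word A k) a, g (update w i₀ a) = g w := fun w a =>
    hc.apply_zero_eq fun j hj => by
      rw [abs_le] at hj
      have hmem : j ∈ Finset.Icc (-(k : ℤ)) k := Finset.mem_Icc.2 (by omega)
      have hne : (⟨j, hmem⟩ : Finset.Icc (-(k : ℤ)) k) ≠ i₀ := fun h => by
        simp [i₀, Subtype.ext_iff] at h
        omega
      simp only [Word.toConfig, dif_pos hmem]
      exact update_of_ne hne _ _
  have hcard : (diffSet k (shiftPow k) c).ncard =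
      (Fintype.card A - 1) * Fintype.card A ^ (2 * k) := by
    rw [hdiff, ← Nat.card_coe_set_eq]
    refine (card_apply_ne_of_update_invariant i₀ g hg).trans ?_
    rw [Fintype.card_coe, Int.card_Icc]
    congr 2
    omega
  have hA : (Fintype.card A : ℝ) ≠ 0 := by positivity
  rw [deltaR, hcard, Nat.cast_mul, Nat.cast_sub Fintype.card_pos, pow_succ]
  push_cast
  field_simp

lemma delta_shiftPow {A : Type} [Fintype A] [Nontrivial A] {r k : ℕ} {c : (ℤ → A) → (ℤ → A)}
    (hc : HasRadius r c) (hrk : r < k) :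
    delta (shiftPow k) c = 1 - 1 / (Fintype.card A : ℝ) := by
  rw [delta, rad_shiftPow, max_eq_left ((rad_le_of_hasRadius hc).trans hrk.le)]
  exact deltaR_shiftPow hc hrk

/-- `δ(σ^{r+1}, c) = 1 - 1/|Σ|` for every CA `c` of radius at most `r`,
and consequently the space of cellular automata is not totally bounded. -/
theorem stmt1 {A : Type} [Fintype A] (hA : 2 ≤ Fintype.card A) :
    (∀ (r : ℕ) (c : (ℤ → A) → (ℤ → A)), HasRadius r c →
      delta (fun x i => x (i + (r : ℤ) + 1)) c = 1 - 1 / (Fintype.card A : ℝ)) ∧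
    (∃ ε : ℝ, 0 < ε ∧ ∀ F : Finset ((ℤ → A) → (ℤ → A)), (∀ f ∈ F, IsCA f) →
      ∃ c, IsCA c ∧ ∀ d ∈ F, ε ≤ delta c d) := by
  have : Nontrivial A := Fintype.one_lt_card_iff_nontrivial.mp hA
  refine ⟨fun r c hc => ?_, 1 / 2, by norm_num, fun F hF => ?_⟩
  · rw [← shiftPow_succ]
    exact delta_shiftPow hc r.lt_succ_self
  · refine ⟨shiftPow (F.sup rad + 1), ⟨_, hasRadius_shiftPow _⟩, fun d hd => ?_⟩
    rw [delta_shiftPow ((hF d hd).hasRadius_rad.mono (Finset.le_sup hd)) (Nat.lt_succ_self _)]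
    have : (1 : ℝ) / Fintype.card A ≤ 1 / 2 :=
      one_div_le_one_div_of_le (by norm_num) (by exact_mod_cast hA)
    linarith
end

section
/- For each p ≥ 1, the set of cellular automata c with c^p = id is closed in the uniform Bernoulli metric space. -/
open MeasureTheory Filter Function

/-!
Write `δ(c, d)` for the uniform Bernoulli measure of `{x | c x 0 ≠ d x 0}`. If `d^[p] = id`, the
maps `c^[k] ∘ d^[p - k]` lead from `c^[p]` to `id`, and two consecutive ones are `c^[k] ∘ a ∘ g`
with `a ∈ {c, d}` and `g = d^[p - k - 1]`. Post-composing with `c^[k]` (radius `k r`) multiplies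
`δ` by at most `2 k r + 1`, and pre-composing with `g` does not increase it, because `g` has the
cellular automaton `d^[k + 1]` as a left inverse. Hence `δ(c^[p], id) ≤ p (2 p r + 1) δ(c, d)`,
which can be made arbitrarily small.

For the pre-composition step let `K` be the supremum of `μ(g⁻¹' C) / μ(C)` over cylinders `C` on
large windows. It is finite because the left inverse recovers most of a window of `x` from `g x`.
Two far-apart translates of a cylinder are independent, and the preimage of their intersection is
covered by cylinders on one larger window; this gives `K ^ 2 ≤ K`, so `K ≤ 1`.
-/

namespace CellularAutomaton

variable {A : Type}

def translate (i : ℤ) (x : ℤ → A) : ℤ → A := fun j => x (i + j)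

noncomputable def window (n : ℕ) : Finset ℤ := Finset.Icc (-(n : ℤ)) n

def disagreementSet (a b : (ℤ → A) → (ℤ → A)) : Set (ℤ → A) := {x | a x 0 ≠ b x 0}

theorem mem_window {n : ℕ} {j : ℤ} : j ∈ window n ↔ |j| ≤ n := by
  rw [window, Finset.mem_Icc, abs_le]

theorem card_window (n : ℕ) : (window n).card = 2 * n + 1 := by
  rw [window, Int.card_Icc]
  omega

theorem window_mono {m n : ℕ} (h : m ≤ n) : window m ⊆ window n :=
  Finset.Icc_subset_Icc (by omega) (by omega)

theorem exists_subset_window (J : Finset ℤ) : ∃ n, J ⊆ window n :=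
  ⟨J.sup Int.natAbs, fun j hj => mem_window.mpr <| by
    rw [Int.abs_eq_natAbs]
    exact_mod_cast Finset.le_sup (f := Int.natAbs) hj⟩

theorem map_window (n : ℕ) (i : ℤ) :
    (window n).map (addLeftEmbedding i) = Finset.Icc (i - n) (i + n) := by
  rw [window, Finset.map_add_left_Icc, sub_eq_add_neg]

section Radius

variable {r s : ℕ} {f g : (ℤ → A) → (ℤ → A)}

theorem _root_.HasRadius.mono_s7 (hf : HasRadius r f) (hrs : r ≤ s) : HasRadius s f := by
  obtain ⟨F, hF, hfF⟩ := hf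
  exact ⟨F, fun x y hxy => hF x y fun j hj => hxy j (hj.trans (by exact_mod_cast hrs)), hfF⟩

theorem hasRadius_id : HasRadius 0 (id : (ℤ → A) → (ℤ → A)) :=
  ⟨fun x => x 0, fun x y h => h 0 (by simp), fun x i => by simp⟩

theorem _root_.HasRadius.comp (hf : HasRadius r f) (hg : HasRadius s g) :
    HasRadius (r + s) (f ∘ g) := by
  obtain ⟨F, hF, hfF⟩ := hf
  obtain ⟨G, hG, hgG⟩ := hg
  refine ⟨fun x => F fun j => G fun k => x (j + k), fun x y hxy => ?_, fun x i => ?_⟩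
  · refine hF _ _ fun j hj => hG _ _ fun k hk => hxy (j + k) ?_
    exact (abs_add_le j k).trans (by push_cast; exact add_le_add hj hk)
  · simp only [comp_apply, hfF, hgG, add_assoc]

theorem _root_.HasRadius.iterate (hf : HasRadius r f) (k : ℕ) : HasRadius (k * r) f^[k] := by
  induction k with
  | zero => simpa using hasRadius_id
  | succ k ih => simpa [iterate_succ, Nat.succ_mul] using ih.comp hf

theorem _root_.HasRadius.apply_eq_apply (hf : HasRadius r f) {x y : ℤ → A} {i : ℤ}
    (h : ∀ j, |j - i| ≤ r → x j = y j) : f x i = f y i := by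
  obtain ⟨F, hF, hfF⟩ := hf
  rw [hfF, hfF]
  exact hF _ _ fun j hj => h (i + j) (by simpa using hj)

theorem _root_.HasRadius.apply_translate (hf : HasRadius r f) (i : ℤ) (x : ℤ → A) :
    f (translate i x) = translate i (f x) := by
  obtain ⟨F, -, hfF⟩ := hf
  funext j
  simp only [translate, hfF, add_assoc]

end Radius

theorem disagreementSet_subset_biUnion_range (F : ℕ → (ℤ → A) → (ℤ → A)) (p : ℕ) :
    disagreementSet (F p) (F 0) ⊆ ⋃ k ∈ Finset.range p, disagreementSet (F (k + 1)) (F k) := by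
  intro x hx
  by_contra hcon
  simp only [Set.mem_iUnion, Finset.mem_range, disagreementSet, Set.mem_ofPred_eq, not_exists,
    not_not] at hcon
  have hconst : ∀ k ≤ p, F k x 0 = F 0 x 0 := by
    intro k hk
    induction k with
    | zero => rfl
    | succ k ih => rw [hcon k (by omega), ih (by omega)]
  exact hx (hconst p le_rfl)

theorem disagreementSet_comp_left_subset {s m n : ℕ} {f a b : (ℤ → A) → (ℤ → A)}
    (hf : HasRadius s f) (ha : HasRadius m a) (hb : HasRadius n b) :
    disagreementSet (f ∘ a) (f ∘ b) ⊆ ⋃ i ∈ window s, translate i ⁻¹' disagreementSet a b := by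
  intro x hx
  by_contra hcon
  simp only [Set.mem_iUnion, Set.mem_preimage, disagreementSet, Set.mem_ofPred_eq,
    ha.apply_translate, hb.apply_translate, translate, add_zero, not_exists, not_not] at hcon
  exact hx (hf.apply_eq_apply fun j hj => hcon j (mem_window.mpr (by simpa using hj)))

theorem disagreementSet_comp_right (a b g : (ℤ → A) → (ℤ → A)) :
    disagreementSet (a ∘ g) (b ∘ g) = g ⁻¹' disagreementSet a b := rfl

def patternCylinder (J : Finset ℤ) (w : J → A) : Set (ℤ → A) := {x | J.restrict x = w}

def IsSupportedOn (J : Finset ℤ) (S : Set (ℤ → A)) : Prop :=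
  ∀ ⦃x y : ℤ → A⦄, (∀ j ∈ J, x j = y j) → x ∈ S → y ∈ S

noncomputable def patternCount (J : Finset ℤ) (S : Set (ℤ → A)) : ℕ := (J.restrict '' S).ncard

section Support

variable {ι : Type*} {J K : Finset ℤ} {S T : Set (ℤ → A)}

theorem IsSupportedOn.mono_s7 (hS : IsSupportedOn J S) (hJK : J ⊆ K) : IsSupportedOn K S :=
  fun _ _ hxy => hS fun j hj => hxy j (hJK hj)

theorem IsSupportedOn.inter (hS : IsSupportedOn J S) (hT : IsSupportedOn K T) :
    IsSupportedOn (J ∪ K) (S ∩ T) := fun _ _ hxy hx =>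
  ⟨hS (fun j hj => hxy j (Finset.mem_union_left K hj)) hx.1,
    hT (fun j hj => hxy j (Finset.mem_union_right J hj)) hx.2⟩

theorem isSupportedOn_biUnion [DecidableEq ι] {F : Finset ι} {J : ι → Finset ℤ}
    {S : ι → Set (ℤ → A)} (hS : ∀ i ∈ F, IsSupportedOn (J i) (S i)) :
    IsSupportedOn (F.biUnion J) (⋃ i ∈ F, S i) := by
  intro x y hxy hx
  simp only [Set.mem_iUnion] at hx ⊢
  obtain ⟨i, hi, hx⟩ := hx
  exact ⟨i, hi, hS i hi (fun j hj => hxy j (Finset.mem_biUnion.mpr ⟨i, hi, hj⟩)) hx⟩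

theorem isSupportedOn_patternCylinder (J : Finset ℤ) (w : J → A) :
    IsSupportedOn J (patternCylinder J w) := by
  intro x y hxy hx
  have : J.restrict y = J.restrict x := funext fun j => (hxy j j.2).symm
  simpa [patternCylinder, this] using hx

theorem IsSupportedOn.preimage_translate (hS : IsSupportedOn J S) (i : ℤ) :
    IsSupportedOn (J.map (addLeftEmbedding i)) (translate i ⁻¹' S) :=
  fun _ _ hxy => hS fun j hj => hxy (i + j) (Finset.mem_map_of_mem _ hj)

theorem IsSupportedOn.preimage {n t : ℕ} {g : (ℤ → A) → (ℤ → A)} (hS : IsSupportedOn (window n) S)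
    (hg : HasRadius t g) : IsSupportedOn (window (n + t)) (g ⁻¹' S) := by
  refine fun x y hxy => hS fun j hj => hg.apply_eq_apply fun k hk => hxy k ?_
  have := mem_window.mp hj
  have := abs_sub_abs_le_abs_sub k j
  exact mem_window.mpr (by push_cast; linarith)

theorem isSupportedOn_disagreementSet {m : ℕ} {a b : (ℤ → A) → (ℤ → A)} (ha : HasRadius m a)
    (hb : HasRadius m b) : IsSupportedOn (window m) (disagreementSet a b) := by
  intro x y hxy hx
  have hxy' : ∀ j, |j - 0| ≤ (m : ℤ) → x j = y j :=
    fun j hj => hxy j (mem_window.mpr (by simpa using hj))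
  simpa only [disagreementSet, Set.mem_ofPred_eq, ha.apply_eq_apply hxy', hb.apply_eq_apply hxy']
    using hx

end Support

section PatternCount

variable {ι : Type*} {J K : Finset ℤ} {S T : Set (ℤ → A)}

theorem patternCount_mono [Finite A] (hST : S ⊆ T) : patternCount J S ≤ patternCount J T :=
  Set.ncard_le_ncard (Set.image_mono hST) (Set.toFinite _)

theorem patternCount_biUnion_le (F : Finset ι) (S : ι → Set (ℤ → A)) :
    patternCount J (⋃ i ∈ F, S i) ≤ ∑ i ∈ F, patternCount J (S i) := by
  rw [patternCount, Set.image_iUnion₂]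
  exact Finset.set_ncard_biUnion_le F _

theorem patternCount_pos [Finite A] (hS : S.Nonempty) : 0 < patternCount J S :=
  (Set.ncard_pos (Set.toFinite _)).mpr (hS.image _)

theorem patternCount_inter_of_disjoint (hS : IsSupportedOn J S) (hT : IsSupportedOn K T)
    (hJK : Disjoint J K) :
    patternCount (J ∪ K) (S ∩ T) = patternCount J S * patternCount K T := by
  classical
  let split (w : (J ∪ K : Finset ℤ) → A) : (J → A) × (K → A) :=
    (Finset.restrict₂ (π := fun _ => A) Finset.subset_union_left w,
      Finset.restrict₂ (π := fun _ => A) Finset.subset_union_right w)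
  have hsplit : split.Injective := by
    intro w w' h
    funext ⟨j, hj⟩
    rcases Finset.mem_union.mp hj with hj | hj
    · exact congrFun (congrArg Prod.fst h) ⟨j, hj⟩
    · exact congrFun (congrArg Prod.snd h) ⟨j, hj⟩
  have himage : split '' ((J ∪ K).restrict '' (S ∩ T)) =
      (J.restrict '' S) ×ˢ (K.restrict '' T) := by
    rw [Set.image_image]
    apply subset_antisymm
    · rintro _ ⟨x, hx, rfl⟩
      exact ⟨⟨x, hx.1, rfl⟩, ⟨x, hx.2, rfl⟩⟩
    · rintro ⟨_, _⟩ ⟨⟨x, hx, rfl⟩, ⟨y, hy, rfl⟩⟩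
      have hyJ : ∀ j ∈ K, j ∉ J := fun j hj => Finset.disjoint_right.mp hJK hj
      refine ⟨J.piecewise x y, ⟨hS (fun j hj => ?_) hx, hT (fun j hj => ?_) hy⟩, ?_⟩
      · simp [hj]
      · simp [hyJ j hj]
      · ext ⟨j, hj⟩
        · simp [split, hj]
        · simp [split, hyJ j hj]
  rw [patternCount, ← Set.ncard_image_of_injective _ hsplit, himage, Set.ncard_prod]
  rfl

theorem restrict_surjective [Nonempty A] (J : Finset ℤ) :
    (J.restrict : (ℤ → A) → (J → A)).Surjective := by
  classical
  exact fun w => ⟨fun i => if h : i ∈ J then w ⟨i, h⟩ else Classical.arbitrary A,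
    funext fun j => dif_pos j.2⟩

theorem patternCount_univ [Fintype A] [Nonempty A] (J : Finset ℤ) :
    patternCount J (Set.univ : Set (ℤ → A)) = Fintype.card A ^ J.card := by
  rw [patternCount, Set.image_univ, (restrict_surjective J).range_eq, Set.ncard_univ,
    Nat.card_eq_fintype_card, Fintype.card_fun, Fintype.card_coe]

theorem patternCount_patternCylinder [Nonempty A] (J : Finset ℤ) (w : J → A) :
    patternCount J (patternCylinder J w) = 1 := by
  change (J.restrict '' ((J.restrict (π := fun _ => A)) ⁻¹' {w})).ncard = 1
  rw [Set.image_preimage_eq _ (restrict_surjective J), Set.ncard_singleton]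

theorem patternCount_eq_of_subset [Fintype A] [Nonempty A] (hS : IsSupportedOn J S)
    (hJK : J ⊆ K) : patternCount K S = patternCount J S * Fintype.card A ^ (K \ J).card := by
  have hunion : J ∪ (K \ J) = K := Finset.union_sdiff_of_subset hJK
  have hdisj := patternCount_inter_of_disjoint hS (fun _ _ _ _ => trivial : IsSupportedOn (K \ J)
    (Set.univ : Set (ℤ → A))) Finset.disjoint_sdiff
  rwa [hunion, Set.inter_univ, patternCount_univ] at hdisj

theorem patternCount_preimage_translate (i : ℤ) :
    patternCount (J.map (addLeftEmbedding i)) (translate i ⁻¹' S) = patternCount J S := by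
  let pull (w : (J.map (addLeftEmbedding i) : Finset ℤ) → A) : J → A :=
    fun j => w ⟨i + j, Finset.mem_map_of_mem _ j.2⟩
  have hpull : pull.Injective := by
    intro w w' h
    funext ⟨k, hk⟩
    obtain ⟨j, hj, rfl⟩ := Finset.mem_map.mp hk
    exact congrFun h ⟨j, hj⟩
  have htranslate : (translate i : (ℤ → A) → (ℤ → A)).Surjective := fun y =>
    ⟨fun k => y (k - i), funext fun j => by simp [translate]⟩
  have himage : pull '' ((J.map (addLeftEmbedding i)).restrict '' (translate i ⁻¹' S)) =
      J.restrict '' S := by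
    rw [Set.image_image]
    conv_rhs => rw [← Set.image_preimage_eq S htranslate, Set.image_image]
    rfl
  rw [patternCount, patternCount, ← himage, Set.ncard_image_of_injective _ hpull]

end PatternCount

noncomputable def supportRadius (S : Set (ℤ → A)) : ℕ := sInf {n | IsSupportedOn (window n) S}

/-- For a set depending only on finitely many coordinates this is its measure under the uniform
Bernoulli measure (see `density_eq`); for other sets the value is meaningless. -/
noncomputable def density [Fintype A] (S : Set (ℤ → A)) : ℝ :=
  patternCount (window (supportRadius S)) S /
    (Fintype.card A : ℝ) ^ (window (supportRadius S)).card

section Density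

variable {ι : Type*} [Fintype A] {J K : Finset ℤ} {S T : Set (ℤ → A)}

theorem density_nonneg (S : Set (ℤ → A)) : 0 ≤ density S := by
  unfold density
  positivity

variable [Nonempty A]

theorem patternCount_div_eq_of_subset (hS : IsSupportedOn J S) (hJK : J ⊆ K) :
    (patternCount K S : ℝ) / (Fintype.card A : ℝ) ^ K.card =
      patternCount J S / (Fintype.card A : ℝ) ^ J.card := by
  have hq : (0 : ℝ) < Fintype.card A := by exact_mod_cast Fintype.card_pos
  rw [patternCount_eq_of_subset hS hJK, ← Finset.card_sdiff_add_card_eq_card hJK, pow_add]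
  push_cast
  field_simp

theorem density_eq (hS : IsSupportedOn J S) :
    density S = patternCount J S / (Fintype.card A : ℝ) ^ J.card := by
  obtain ⟨n, hn⟩ := exists_subset_window J
  have hrad : IsSupportedOn (window (supportRadius S)) S :=
    Nat.sInf_mem (s := {m | IsSupportedOn (window m) S}) ⟨n, hS.mono_s7 hn⟩
  rw [density, ← patternCount_div_eq_of_subset hrad Finset.subset_union_left,
    patternCount_div_eq_of_subset hS Finset.subset_union_right]

theorem density_mono (hS : IsSupportedOn J S) (hT : IsSupportedOn K T) (hST : S ⊆ T) :
    density S ≤ density T := by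
  rw [density_eq (hS.mono_s7 Finset.subset_union_left), density_eq (hT.mono_s7 Finset.subset_union_right)]
  gcongr
  exact patternCount_mono hST

theorem density_pos (hS : IsSupportedOn J S) (hne : S.Nonempty) : 0 < density S := by
  rw [density_eq hS]
  have := patternCount_pos (J := J) hne
  positivity

theorem density_patternCylinder (J : Finset ℤ) (w : J → A) :
    density (patternCylinder J w) = ((Fintype.card A : ℝ) ^ J.card)⁻¹ := by
  rw [density_eq (isSupportedOn_patternCylinder J w), patternCount_patternCylinder, Nat.cast_one,
    one_div]

theorem density_biUnion_le [DecidableEq ι] {F : Finset ι} {J : ι → Finset ℤ}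
    {S : ι → Set (ℤ → A)} (hS : ∀ i ∈ F, IsSupportedOn (J i) (S i)) :
    density (⋃ i ∈ F, S i) ≤ ∑ i ∈ F, density (S i) := by
  have hS' : ∀ i ∈ F, IsSupportedOn (F.biUnion J) (S i) :=
    fun i hi => (hS i hi).mono_s7 (Finset.subset_biUnion_of_mem J hi)
  rw [density_eq (isSupportedOn_biUnion hS), Finset.sum_congr rfl fun i hi => density_eq (hS' i hi),
    ← Finset.sum_div]
  gcongr
  exact_mod_cast patternCount_biUnion_le F S

theorem density_inter_of_disjoint (hS : IsSupportedOn J S) (hT : IsSupportedOn K T)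
    (hJK : Disjoint J K) : density (S ∩ T) = density S * density T := by
  rw [density_eq (hS.inter hT), density_eq hS, density_eq hT,
    patternCount_inter_of_disjoint hS hT hJK, Finset.card_union_of_disjoint hJK, pow_add]
  push_cast
  ring

theorem density_preimage_translate (hS : IsSupportedOn J S) (i : ℤ) :
    density (translate i ⁻¹' S) = density S := by
  rw [density_eq (hS.preimage_translate i), density_eq hS, patternCount_preimage_translate,
    Finset.card_map]

theorem density_preimage_le_mul_of_patternCylinder {n t : ℕ} {g : (ℤ → A) → (ℤ → A)} {κ : ℝ}
    (hg : HasRadius t g) (hS : IsSupportedOn (window n) S)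
    (hκ : ∀ w, density (g ⁻¹' patternCylinder (window n) w) ≤
      κ * density (patternCylinder (window n) w)) :
    density (g ⁻¹' S) ≤ κ * density S := by
  classical
  obtain ⟨W, hW⟩ := ((window n).restrict '' S).toFinite.exists_finset_coe
  have hS_eq : S = ⋃ w ∈ W, patternCylinder (window n) w := by
    ext x
    simp only [Set.mem_iUnion, ← Finset.mem_coe, hW, patternCylinder, Set.mem_ofPred_eq,
      exists_prop]
    refine ⟨fun hx => ⟨_, ⟨x, hx, rfl⟩, rfl⟩, fun ⟨_, ⟨y, hy, hyw⟩, hxw⟩ => hS (fun j hj => ?_) hy⟩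
    exact congrFun (hyw.trans hxw.symm) ⟨j, hj⟩
  calc density (g ⁻¹' S)
      = density (⋃ w ∈ W, g ⁻¹' patternCylinder (window n) w) := by
        rw [hS_eq, Set.preimage_iUnion₂]
    _ ≤ ∑ w ∈ W, density (g ⁻¹' patternCylinder (window n) w) :=
        density_biUnion_le fun w _ => (isSupportedOn_patternCylinder _ _).preimage hg
    _ ≤ ∑ w ∈ W, κ * ((Fintype.card A : ℝ) ^ (window n).card)⁻¹ :=
        Finset.sum_le_sum fun w _ => (hκ w).trans_eq (by rw [density_patternCylinder])
    _ = κ * density S := by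
        rw [Finset.sum_const, nsmul_eq_mul, density_eq hS, patternCount, ← hW,
          Set.ncard_coe_finset]
        ring

end Density

section Balance

variable [Fintype A] [Nonempty A] {t u : ℕ} {g h : (ℤ → A) → (ℤ → A)}

theorem density_preimage_patternCylinder_le_pow_mul (hg : HasRadius t g)
    (hh : HasRadius u h) (hhg : LeftInverse h g) (m : ℕ) (w : window (m + u) → A) :
    density (g ⁻¹' patternCylinder (window (m + u)) w) ≤
      (Fintype.card A : ℝ) ^ (2 * u) * density (patternCylinder (window (m + u)) w) := by
  set P := g ⁻¹' patternCylinder (window (m + u)) w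
  have hP : IsSupportedOn (window (m + u + t)) P :=
    (isSupportedOn_patternCylinder _ w).preimage hg
  rcases P.eq_empty_or_nonempty with hempty | ⟨x₀, hx₀⟩
  · rw [hempty, density_eq (J := ∅) fun _ _ _ h => h]
    simp only [patternCount, Set.image_empty, Set.ncard_empty, Nat.cast_zero, zero_div]
    exact mul_nonneg (by positivity) (density_nonneg _)
  -- `h ∘ g = id` recovers `x` on `window m` from `g x` on `window (m + u)`.
  have hsub : P ⊆ patternCylinder (window m) ((window m).restrict x₀) := by
    intro x hx
    funext ⟨j, hj⟩
    change x j = x₀ j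
    rw [← hhg x, ← hhg x₀]
    refine hh.apply_eq_apply fun k hk => ?_
    have hk' : k ∈ window (m + u) := by
      have := mem_window.mp hj
      have := abs_sub_abs_le_abs_sub k j
      exact mem_window.mpr (by push_cast; linarith)
    exact (congrFun hx ⟨k, hk'⟩).trans (congrFun hx₀ ⟨k, hk'⟩).symm
  calc density P
      ≤ density (patternCylinder (window m) ((window m).restrict x₀)) :=
        density_mono hP (isSupportedOn_patternCylinder _ _) hsub
    _ = (Fintype.card A : ℝ) ^ (2 * u) * density (patternCylinder (window (m + u)) w) := by
        have hq : (0 : ℝ) < Fintype.card A := by exact_mod_cast Fintype.card_pos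
        rw [density_patternCylinder, density_patternCylinder, card_window, card_window,
          show 2 * (m + u) + 1 = 2 * u + (2 * m + 1) by ring, pow_add]
        field_simp
        ring

theorem density_preimage_patternCylinder_sq_le (hg : HasRadius t g) {m : ℕ} {κ : ℝ}
    (hκ : ∀ w, density (g ⁻¹' patternCylinder (window (2 * m + t + 1)) w) ≤
      κ * density (patternCylinder (window (2 * m + t + 1)) w))
    (w : window m → A) :
    density (g ⁻¹' patternCylinder (window m) w) ^ 2 ≤
      κ * density (patternCylinder (window m) w) ^ 2 := by
  set o : ℤ := m + t + 1
  set C := patternCylinder (window m) w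
  set Z := translate (-o) ⁻¹' C ∩ translate o ⁻¹' C
  have hdisj : ∀ n : ℕ, n < o → Disjoint ((window n).map (addLeftEmbedding (-o)))
      ((window n).map (addLeftEmbedding o)) := by
    intro n hn
    rw [map_window, map_window, Finset.disjoint_left]
    intro z hz₁ hz₂
    rw [Finset.mem_Icc] at hz₁ hz₂
    omega
  have hC := isSupportedOn_patternCylinder (window m) w
  have hgC : IsSupportedOn (window (m + t)) (g ⁻¹' C) := hC.preimage hg
  have hZ : IsSupportedOn (window (2 * m + t + 1)) Z := by
    refine ((hC.preimage_translate _).inter (hC.preimage_translate _)).mono_s7 fun z hz => ?_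
    rw [Finset.mem_union, map_window, map_window, Finset.mem_Icc, Finset.mem_Icc] at hz
    rw [mem_window, abs_le]
    omega
  have hgZ : g ⁻¹' Z = translate (-o) ⁻¹' (g ⁻¹' C) ∩ translate o ⁻¹' (g ⁻¹' C) := by
    ext x
    simp only [Z, Set.mem_inter_iff, Set.mem_preimage, hg.apply_translate]
  calc density (g ⁻¹' C) ^ 2
      = density (translate (-o) ⁻¹' (g ⁻¹' C)) * density (translate o ⁻¹' (g ⁻¹' C)) := by
        rw [density_preimage_translate hgC, density_preimage_translate hgC, sq]
    _ = density (g ⁻¹' Z) := by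
        rw [hgZ, density_inter_of_disjoint (hgC.preimage_translate _) (hgC.preimage_translate _)
          (hdisj _ (by omega))]
    _ ≤ κ * density Z := density_preimage_le_mul_of_patternCylinder hg hZ hκ
    _ = κ * density C ^ 2 := by
        rw [density_inter_of_disjoint (hC.preimage_translate _) (hC.preimage_translate _)
          (hdisj _ (by omega)), density_preimage_translate hC, density_preimage_translate hC, sq]

theorem density_preimage_patternCylinder_le (hg : HasRadius t g) (hh : HasRadius u h)
    (hhg : LeftInverse h g) {n : ℕ} (hn : u ≤ n) (w : window n → A) :
    density (g ⁻¹' patternCylinder (window n) w) ≤ density (patternCylinder (window n) w) := by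
  have hpos : ∀ n (w : window n → A), 0 < density (patternCylinder (window n) w) := by
    intro n w
    rw [density_patternCylinder]
    positivity
  set R : Set ℝ := {ρ | ∃ n, u ≤ n ∧ ∃ w : window n → A,
    density (g ⁻¹' patternCylinder (window n) w) / density (patternCylinder (window n) w) = ρ}
  set K := sSup R
  have hR : BddAbove R := by
    refine ⟨(Fintype.card A : ℝ) ^ (2 * u), ?_⟩
    rintro _ ⟨n, hn, w, rfl⟩
    obtain ⟨m, rfl⟩ := Nat.exists_eq_add_of_le' hn
    rw [div_le_iff₀ (hpos _ w)]
    exact density_preimage_patternCylinder_le_pow_mul hg hh hhg m w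
  have hK : ∀ n, u ≤ n → ∀ w : window n → A,
      density (g ⁻¹' patternCylinder (window n) w) ≤ K * density (patternCylinder (window n) w) :=
    fun n hn w => (div_le_iff₀ (hpos n w)).mp (le_csSup hR ⟨n, hn, w, rfl⟩)
  have hK_nonneg : 0 ≤ K :=
    (div_nonneg (density_nonneg _) (density_nonneg _)).trans (le_csSup hR ⟨n, hn, w, rfl⟩)
  have hK_le_sqrt : K ≤ √K := by
    refine csSup_le ⟨_, n, hn, w, rfl⟩ ?_
    rintro _ ⟨m, hm, v, rfl⟩
    refine Real.le_sqrt_of_sq_le ?_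
    rw [div_pow, div_le_iff₀ (pow_pos (hpos m v) 2)]
    exact density_preimage_patternCylinder_sq_le hg (hK _ (by omega)) v
  have hK_le_one : K ≤ 1 := by
    nlinarith [Real.sq_sqrt hK_nonneg, Real.sqrt_nonneg K]
  calc density (g ⁻¹' patternCylinder (window n) w)
      ≤ K * density (patternCylinder (window n) w) := hK n hn w
    _ ≤ density (patternCylinder (window n) w) :=
        mul_le_of_le_one_left (density_nonneg _) hK_le_one

theorem density_preimage_le_of_leftInverse (hg : HasRadius t g) (hh : HasRadius u h)
    (hhg : LeftInverse h g) {n : ℕ} {S : Set (ℤ → A)} (hS : IsSupportedOn (window n) S) :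
    density (g ⁻¹' S) ≤ density S := by
  have hS' := hS.mono_s7 (window_mono (le_max_left n u))
  simpa only [one_mul] using density_preimage_le_mul_of_patternCylinder hg hS' fun w =>
    (density_preimage_patternCylinder_le hg hh hhg (le_max_right n u) w).trans_eq (one_mul _).symm

end Balance

section Disagreement

variable [Fintype A] [Nonempty A] {m : ℕ} {a b : (ℤ → A) → (ℤ → A)}

theorem density_disagreementSet_comp_left_le {s : ℕ} {f : (ℤ → A) → (ℤ → A)}
    (hf : HasRadius s f) (ha : HasRadius m a) (hb : HasRadius m b) :
    density (disagreementSet (f ∘ a) (f ∘ b)) ≤ (2 * s + 1) * density (disagreementSet a b) := by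
  classical
  have hD := isSupportedOn_disagreementSet ha hb
  calc density (disagreementSet (f ∘ a) (f ∘ b))
      ≤ density (⋃ i ∈ window s, translate i ⁻¹' disagreementSet a b) :=
        density_mono (isSupportedOn_disagreementSet (hf.comp ha) (hf.comp hb))
          (isSupportedOn_biUnion fun i _ => hD.preimage_translate i)
          (disagreementSet_comp_left_subset hf ha hb)
    _ ≤ ∑ i ∈ window s, density (translate i ⁻¹' disagreementSet a b) :=
        density_biUnion_le fun i _ => hD.preimage_translate i
    _ = (2 * s + 1) * density (disagreementSet a b) := by
        simp only [density_preimage_translate hD, Finset.sum_const, card_window, nsmul_eq_mul]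
        push_cast
        ring

theorem density_disagreementSet_comp_right_le {t u : ℕ} {g h : (ℤ → A) → (ℤ → A)}
    (hg : HasRadius t g) (hh : HasRadius u h) (hhg : LeftInverse h g) (ha : HasRadius m a)
    (hb : HasRadius m b) :
    density (disagreementSet (a ∘ g) (b ∘ g)) ≤ density (disagreementSet a b) := by
  rw [disagreementSet_comp_right]
  exact density_preimage_le_of_leftInverse hg hh hhg (isSupportedOn_disagreementSet ha hb)

theorem eq_of_density_disagreementSet_nonpos (ha : HasRadius m a) (hb : HasRadius m b)
    (h : density (disagreementSet a b) ≤ 0) : a = b := by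
  funext x i
  by_contra hne
  have hx : translate i x ∈ disagreementSet a b := by
    simpa [disagreementSet, ha.apply_translate, hb.apply_translate, translate] using hne
  exact (density_pos (isSupportedOn_disagreementSet ha hb) ⟨_, hx⟩).not_ge h

theorem density_disagreementSet_comp_comp_le {s t u : ℕ} {f g h : (ℤ → A) → (ℤ → A)}
    (hf : HasRadius s f) (hg : HasRadius t g) (hh : HasRadius u h) (hhg : LeftInverse h g)
    (ha : HasRadius m a) (hb : HasRadius m b) :
    density (disagreementSet (f ∘ a ∘ g) (f ∘ b ∘ g)) ≤
      (2 * s + 1) * density (disagreementSet a b) := by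
  refine (density_disagreementSet_comp_left_le hf (ha.comp hg) (hb.comp hg)).trans ?_
  gcongr
  exact density_disagreementSet_comp_right_le hg hh hhg ha hb

theorem density_disagreementSet_iterate_le {r s p : ℕ} {c d : (ℤ → A) → (ℤ → A)}
    (hc : HasRadius r c) (hd : HasRadius s d) (hdp : d^[p] = id) :
    density (disagreementSet c^[p] id) ≤
      p * (2 * (p * r : ℕ) + 1) * density (disagreementSet c d) := by
  classical
  set F : ℕ → (ℤ → A) → (ℤ → A) := fun k => c^[k] ∘ d^[p - k]
  have hF : ∀ k ≤ p, HasRadius (p * r + p * s) (F k) := fun k hk =>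
    ((hc.iterate k).comp (hd.iterate (p - k))).mono_s7
      (add_le_add (Nat.mul_le_mul_right r hk) (Nat.mul_le_mul_right s (Nat.sub_le p k)))
  have hsupp : ∀ k ∈ Finset.range p,
      IsSupportedOn (window (p * r + p * s)) (disagreementSet (F (k + 1)) (F k)) :=
    fun k hk => isSupportedOn_disagreementSet (hF _ (Finset.mem_range.mp hk))
      (hF _ (Finset.mem_range.mp hk).le)
  have hstep : ∀ k ∈ Finset.range p, density (disagreementSet (F (k + 1)) (F k)) ≤
      (2 * (p * r : ℕ) + 1) * density (disagreementSet c d) := by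
    intro k hk
    have hkp := Finset.mem_range.mp hk
    have hinv : LeftInverse d^[k + 1] d^[p - (k + 1)] := fun x => by
      rw [← iterate_add_apply, Nat.add_sub_cancel' hkp, hdp, id]
    have hFk : F k = c^[k] ∘ d ∘ d^[p - (k + 1)] := by
      rw [← iterate_succ', Nat.succ_eq_add_one, show p - (k + 1) + 1 = p - k by omega]
    have hFk₁ : F (k + 1) = c^[k] ∘ c ∘ d^[p - (k + 1)] := by
      simp only [F, iterate_succ, comp_assoc]
    rw [hFk, hFk₁]
    refine (density_disagreementSet_comp_comp_le (hc.iterate k) (hd.iterate _) (hd.iterate _) hinv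
      (hc.mono_s7 (le_max_left r s)) (hd.mono_s7 (le_max_right r s))).trans ?_
    gcongr
    exact density_nonneg _
  calc density (disagreementSet c^[p] id)
      = density (disagreementSet (F p) (F 0)) := by
        simp only [F, Nat.sub_self, Nat.sub_zero, iterate_zero, comp_id, hdp]
    _ ≤ density (⋃ k ∈ Finset.range p, disagreementSet (F (k + 1)) (F k)) :=
        density_mono (isSupportedOn_disagreementSet (hF p le_rfl) (hF 0 (Nat.zero_le p)))
          (isSupportedOn_biUnion hsupp) (disagreementSet_subset_biUnion_range F p)
    _ ≤ ∑ k ∈ Finset.range p, density (disagreementSet (F (k + 1)) (F k)) :=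
        density_biUnion_le hsupp
    _ ≤ ∑ k ∈ Finset.range p, (2 * (p * r : ℕ) + 1) * density (disagreementSet c d) :=
        Finset.sum_le_sum hstep
    _ = p * (2 * (p * r : ℕ) + 1) * density (disagreementSet c d) := by
        rw [Finset.sum_const, Finset.card_range, nsmul_eq_mul, mul_assoc]

theorem delta_eq_density {c d : (ℤ → A) → (ℤ → A)} (hc : IsCA c) (hd : IsCA d) :
    delta c d = density (disagreementSet c d) := by
  have hc' : HasRadius (rad c) c := Nat.sInf_mem hc
  have hd' : HasRadius (rad d) d := Nat.sInf_mem hd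
  rw [density_eq (isSupportedOn_disagreementSet (hc'.mono_s7 (le_max_left _ (rad d)))
    (hd'.mono_s7 (le_max_right (rad c) _))), delta, deltaR, card_window]
  congr 3
  ext w
  exact ⟨fun ⟨x, hxw, hx⟩ => ⟨x, hx, funext hxw⟩, fun ⟨x, hx, hxw⟩ => ⟨x, congrFun hxw, hx⟩⟩

end Disagreement

end CellularAutomaton

open CellularAutomaton Topology in
theorem stmt7_general {A : Type} [Fintype A] (hA : 2 ≤ Fintype.card A) (p : ℕ)
    (c : (ℤ → A) → (ℤ → A)) (hc : IsCA c)
    (hcl : ∀ ε : ℝ, 0 < ε → ∃ d, IsCA d ∧ d^[p] = id ∧ delta c d < ε) :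
    c^[p] = id := by
  have : Nonempty A := Fintype.card_pos_iff.mp (by omega)
  obtain ⟨r, hr⟩ := hc
  set K : ℝ := p * (2 * (p * r : ℕ) + 1)
  have hsmall : ∀ ε > 0, density (disagreementSet c^[p] id) ≤ K * ε := by
    intro ε hε
    obtain ⟨d, ⟨s, hs⟩, hdp, hδ⟩ := hcl ε hε
    calc density (disagreementSet c^[p] id) ≤ K * density (disagreementSet c d) :=
          density_disagreementSet_iterate_le hr hs hdp
      _ ≤ K * ε := by
          rw [← delta_eq_density ⟨r, hr⟩ ⟨s, hs⟩]
          gcongr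
  have hlim : Tendsto (fun ε => K * ε) (𝓝[>] 0) (𝓝 0) := by
    simpa using ((continuous_const_mul K).tendsto 0).mono_left nhdsWithin_le_nhds
  exact eq_of_density_disagreementSet_nonpos (hr.iterate p) (hasRadius_id.mono_s7 (Nat.zero_le _))
    (ge_of_tendsto hlim (eventually_nhdsWithin_of_forall hsmall))

/-- for each `p ≥ 1`, the set of `p`-periodic cellular automata
(those with `c^p = id`) is closed. -/
theorem stmt7 {A : Type} [Fintype A] (hA : 2 ≤ Fintype.card A) (p : ℕ) (hp : 1 ≤ p)
    (c : (ℤ → A) → (ℤ → A)) (hc : IsCA c)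
    (hcl : ∀ ε : ℝ, 0 < ε → ∃ d, IsCA d ∧ d^[p] = id ∧ delta c d < ε) :
    c^[p] = id :=
  stmt7_general hA p c hc hcl
end

section
/- The uniform Bernoulli metric space of cellular automata has no isolated points: for every cellular automaton c and every ε > 0 there exists a cellular automaton d ≠ c with δ(c,d) < ε. (One may take d with radius r(c)+i agreeing with c on all centered words of radius r(c)+i except the all-zero word.) -/
open MeasureTheory Filter Function

/-!
Perturb `c` at a single word: for a radius `R > rad c`, let `d` output a symbol `b ≠ c (const a) 0`
whenever the window `[-R, R]` is constantly `a`, and act as `c` otherwise. Then `d` has minimal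
radius exactly `R`, the two automata differ only on the constant word of radius `R`, so
`δ(c, d) = |A|^-(2R+1)`, which is below `ε` once `R` is large.
-/

namespace HasRadius

variable {A : Type} {f : (ℤ → A) → (ℤ → A)} {r : ℕ}

theorem apply_zero_eq_s8 (hf : HasRadius r f) {x y : ℤ → A}
    (hxy : ∀ j : ℤ, |j| ≤ (r : ℤ) → x j = y j) : f x 0 = f y 0 := by
  obtain ⟨F, hF, hfF⟩ := hf
  simpa only [hfF, zero_add] using hF x y hxy

theorem le_of_apply_zero_ne (hf : HasRadius r f) {R : ℕ} {x y : ℤ → A}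
    (hxy : ∀ j : ℤ, |j| < (R : ℤ) → x j = y j) (hne : f x 0 ≠ f y 0) : R ≤ r := by
  by_contra! hlt
  exact hne (hf.apply_zero_eq_s8 fun j hj => hxy j (hj.trans_lt (by exact_mod_cast hlt)))

end HasRadius

theorem rad_eq_of_hasRadius {A : Type} {f : (ℤ → A) → (ℤ → A)} {R : ℕ} (hR : HasRadius R f)
    (hmin : ∀ r, HasRadius r f → R ≤ r) : rad f = R :=
  le_antisymm (Nat.sInf_le hR) (le_csInf ⟨R, hR⟩ hmin)

section Perturb

open Classical

variable {A : Type}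

noncomputable def perturb (c : (ℤ → A) → (ℤ → A)) (R : ℕ) (a b : A) : (ℤ → A) → (ℤ → A) :=
  fun x i => if ∀ j : ℤ, |j| ≤ (R : ℤ) → x (i + j) = a then b else c x i

variable {c : (ℤ → A) → (ℤ → A)} {R : ℕ} {a b : A}

theorem perturb_const_apply_zero : perturb c R a b (fun _ => a) 0 = b := by
  simp [perturb]

theorem perturb_ne (hb : b ≠ c (fun _ => a) 0) : perturb c R a b ≠ c := fun h =>
  hb (by rw [← h, perturb_const_apply_zero])

theorem hasRadius_perturb {r : ℕ} (hc : HasRadius r c) (hrR : r ≤ R) :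
    HasRadius R (perturb c R a b) := by
  obtain ⟨F, hF, hcF⟩ := hc
  refine ⟨fun x => if ∀ j : ℤ, |j| ≤ (R : ℤ) → x j = a then b else F x, ?_, ?_⟩
  · intro x y hxy
    have hwindow : (∀ j : ℤ, |j| ≤ (R : ℤ) → x j = a) ↔ ∀ j : ℤ, |j| ≤ (R : ℤ) → y j = a :=
      forall₂_congr fun j hj => by rw [hxy j hj]
    dsimp only
    rw [if_congr hwindow rfl (hF x y fun j hj => hxy j (hj.trans (by exact_mod_cast hrR)))]
  · intro x i
    simp only [perturb, hcF]

theorem rad_perturb {r : ℕ} (hc : HasRadius r c) (hrR : r < R) {a' : A} (ha' : a' ≠ a)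
    (hb : b ≠ c (fun _ => a) 0) : rad (perturb c R a b) = R := by
  -- `y` differs from the constant configuration only at `R`: visible to `perturb`, not to `c`.
  let y : ℤ → A := Function.update (fun _ => a) (R : ℤ) a'
  have hy : ∀ j : ℤ, |j| < (R : ℤ) → a = y j := fun j hj =>
    (Function.update_of_ne (show j ≠ R by rintro rfl; simp at hj) a' fun _ => a).symm
  have hcy : c y 0 = c (fun _ => a) 0 :=
    hc.apply_zero_eq_s8 fun j hj => (hy j (hj.trans_lt (by exact_mod_cast hrR))).symm
  have hdy : perturb c R a b y 0 = c y 0 :=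
    if_neg fun h => ha' (by simpa [y] using h R (by simp))
  refine rad_eq_of_hasRadius (hasRadius_perturb hc hrR.le) fun s hs => hs.le_of_apply_zero_ne hy ?_
  rw [perturb_const_apply_zero, hdy, hcy]
  exact hb

theorem diffSet_perturb (hb : b ≠ c (fun _ => a) 0) :
    diffSet R c (perturb c R a b) = {fun _ => a} := by
  ext w
  constructor
  · rintro ⟨x, hxw, hne⟩
    have hwindow : ∀ j : ℤ, |j| ≤ (R : ℤ) → x (0 + j) = a := by
      by_contra h
      exact hne (if_neg h : perturb c R a b x 0 = c x 0).symm
    funext j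
    rw [← hxw j, ← zero_add (j : ℤ)]
    exact hwindow j (abs_le.mpr (Finset.mem_Icc.mp j.2))
  · rintro rfl
    exact ⟨fun _ => a, fun _ => rfl, by rw [perturb_const_apply_zero]; exact hb.symm⟩

end Perturb

theorem deltaR_eq_of_diffSet_eq_singleton {A : Type} [Fintype A] {r : ℕ}
    {c d : (ℤ → A) → (ℤ → A)} {w : Word A r} (h : diffSet r c d = {w}) :
    deltaR r c d = 1 / (Fintype.card A : ℝ) ^ (2 * r + 1) := by
  rw [deltaR, h, Set.ncard_singleton, Nat.cast_one]

theorem exists_gt_one_div_pow_lt {k : ℝ} (hk : 1 < k) (r : ℕ) {ε : ℝ} (hε : 0 < ε) :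
    ∃ R, r < R ∧ 1 / k ^ (2 * R + 1) < ε := by
  have hk₀ : 0 ≤ k⁻¹ := inv_nonneg.mpr (by linarith)
  obtain ⟨n, hn⟩ := exists_pow_lt_of_lt_one hε (inv_lt_one_of_one_lt₀ hk)
  refine ⟨max (r + 1) n, by omega, ?_⟩
  rw [one_div, ← inv_pow]
  exact (pow_le_pow_of_le_one hk₀ (inv_le_one_of_one_le₀ hk.le) (by omega)).trans_lt hn

/-- the uniform Bernoulli space of cellular automata has no isolated
points. -/
theorem stmt8 {A : Type} [Fintype A] (hA : 2 ≤ Fintype.card A)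
    (c : (ℤ → A) → (ℤ → A)) (hc : IsCA c) (ε : ℝ) (hε : 0 < ε) :
    ∃ d, IsCA d ∧ d ≠ c ∧ delta c d < ε := by
  have hradc : HasRadius (rad c) c := Nat.sInf_mem hc
  obtain ⟨a, a', ha'⟩ := Fintype.exists_pair_of_one_lt_card hA
  obtain ⟨b, hb⟩ := Fintype.exists_ne_of_one_lt_card hA (c (fun _ => a) 0)
  obtain ⟨R, hR, hRε⟩ :=
    exists_gt_one_div_pow_lt (k := Fintype.card A) (by exact_mod_cast hA) (rad c) hε
  refine ⟨perturb c R a b, ⟨R, hasRadius_perturb hradc hR.le⟩, perturb_ne hb, ?_⟩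
  rwa [delta, rad_perturb hradc hR ha'.symm hb, max_eq_right hR.le,
    deltaR_eq_of_diffSet_eq_singleton (diffSet_perturb hb)]
end
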